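/- For all finite simple graphs G and H, the independence-domination number of the Cartesian product satisfies γ^i(G □ H) ≥ γ^i(G) · γ^i(H). -/

import Mathlib

/-- `A` dominates `B` in `G`: every vertex of `B` lies in the closed
neighborhood of some vertex of `A`. -/
def Dominates {V : Type*} (G : SimpleGraph V) (A B : Finset V) : Prop :=
  ∀ b ∈ B, ∃ a ∈ A, a = b ∨ G.Adj a b

/-- `γ_G(B)`: the minimum cardinality of a set of vertices dominating `B`. -/
noncomputable def domNum {V : Type*} (G : SimpleGraph V) (B : Finset V) : ℕ :=
  sInf {n | ∃ A : Finset V, A.card = n ∧ Dominates G A B}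

/-- The domination number `γ(G)`. -/
noncomputable def gamma {V : Type*} [Fintype V] (G : SimpleGraph V) : ℕ :=
  domNum G Finset.univ

/-- `A` is an independent set in `G`. -/
def IndepIn {V : Type*} (G : SimpleGraph V) (A : Finset V) : Prop :=
  ∀ x ∈ A, ∀ y ∈ A, ¬ G.Adj x y

/-- The independence-domination number `γ^i(G)`. -/
noncomputable def gammaI {V : Type*} (G : SimpleGraph V) : ℕ :=
  sSup {n | ∃ A : Finset V, IndepIn G A ∧ domNum G A = n}

/-!
If `A` and `B` are independent sets attaining `γ^i(G)` and `γ^i(H)`, then `A ×ˢ B` is independent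
in `G □ H`, so it is enough that every `D` dominating `A ×ˢ B` has at least `γ_G(A) · γ_H(B)`
vertices when `B` is independent.

Fix a minimum dominating set `T` of `A` and a dominator `rep a ∈ T` of each `a ∈ A`. For `b ∈ B`,
the first coordinates of `D ∩ (V × {b})` together with the set `I b` of all `rep a` with
`(a, u) ∈ D`, `u ~ b`, dominate `A`. For `v ∈ T`, the `b ∈ B` with `v ∈ I b` are dominated by the
set `Z v` of second coordinates of the `(a, u) ∈ D` with `rep a = v` and `u ∉ B` (`u ~ b` forces
`u ∉ B` as `B` is independent), so `γ_H(B) + #{b ∈ B | v ∈ I b} ≤ #(Z v) + #B`. Summing the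
first bound over `B` and the second over `T`, the terms `#(I b)` cancel by double counting, and
what is left is bounded by `#(D ∩ (V × B)) + #(D \ (V × B)) = #D`.
-/

open Finset

section

variable {V W : Type*}

lemma Dominates.refl (G : SimpleGraph V) (B : Finset V) : Dominates G B B :=
  fun b hb => ⟨b, hb, Or.inl rfl⟩

lemma domNum_le_card_of_dominates {G : SimpleGraph V} {X B : Finset V} (h : Dominates G X B) :
    domNum G B ≤ #X :=
  Nat.sInf_le ⟨X, rfl, h⟩

lemma domNum_le_card (G : SimpleGraph V) (B : Finset V) : domNum G B ≤ #B :=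
  domNum_le_card_of_dominates (.refl G B)

lemma exists_dominates_card_eq_domNum (G : SimpleGraph V) (B : Finset V) :
    ∃ X : Finset V, #X = domNum G B ∧ Dominates G X B :=
  Nat.sInf_mem (s := {n | ∃ X : Finset V, #X = n ∧ Dominates G X B}) ⟨#B, B, rfl, .refl G B⟩

lemma sum_card_fiberwise_add_card_filter_notMem {α β : Type*} [DecidableEq β] (s : Finset α)
    (t : Finset β) (f : α → β) : ∑ b ∈ t, #{a ∈ s | f a = b} + #{a ∈ s | f a ∉ t} = #s := by
  have hfib : ∑ b ∈ t, #{a ∈ s | f a = b} = #{a ∈ s | f a ∈ t} := by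
    rw [card_eq_sum_card_fiberwise (f := f) (s := {a ∈ s | f a ∈ t}) (t := t)
      fun a ha => (mem_filter.1 ha).2]
    refine sum_congr rfl fun b hb => ?_
    rw [filter_filter]
    exact congrArg card (filter_congr fun a _ => by grind)
  rw [hfib, card_filter_add_card_filter_not]

lemma sum_card_image_filter_le {α β γ : Type*} [DecidableEq β] [DecidableEq γ] {s : Finset α}
    {t : Finset β} {g : α → β} {f : α → γ} (hg : ∀ a ∈ s, g a ∈ t) :
    ∑ b ∈ t, #({a ∈ s | g a = b}.image f) ≤ #s :=
  calc ∑ b ∈ t, #({a ∈ s | g a = b}.image f)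
    _ ≤ ∑ b ∈ t, #{a ∈ s | g a = b} := sum_le_sum fun _ _ => card_image_le
    _ = #s := (card_eq_sum_card_fiberwise hg).symm

lemma domNum_add_card_le [DecidableEq V] {G : SimpleGraph V} {B B' Z : Finset V}
    (hB' : B' ⊆ B) (hZ : Dominates G Z B') : domNum G B + #B' ≤ #Z + #B := by
  have hdom : Dominates G (Z ∪ (B \ B')) B := by
    intro b hb
    by_cases h : b ∈ B'
    · obtain ⟨z, hz, hzb⟩ := hZ b h
      exact ⟨z, mem_union_left _ hz, hzb⟩
    · exact ⟨b, mem_union_right _ (mem_sdiff.2 ⟨hb, h⟩), Or.inl rfl⟩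
  have := (domNum_le_card_of_dominates hdom).trans (card_union_le _ _)
  rw [card_sdiff_of_subset hB'] at this
  have := card_le_card hB'
  omega

section gammaI

variable [Fintype V] {G : SimpleGraph V}

lemma bddAbove_domNum_indepIn (G : SimpleGraph V) :
    BddAbove {n | ∃ A : Finset V, IndepIn G A ∧ domNum G A = n} :=
  ⟨Fintype.card V, by rintro _ ⟨A, -, rfl⟩; exact (domNum_le_card G A).trans (card_le_univ A)⟩

lemma domNum_le_gammaI {A : Finset V} (hA : IndepIn G A) : domNum G A ≤ gammaI G :=
  le_csSup (bddAbove_domNum_indepIn G) ⟨A, hA, rfl⟩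

lemma exists_indepIn_domNum_eq_gammaI (G : SimpleGraph V) :
    ∃ A : Finset V, IndepIn G A ∧ domNum G A = gammaI G :=
  Nat.sSup_mem (s := {n | ∃ A : Finset V, IndepIn G A ∧ domNum G A = n})
    ⟨_, ∅, by simp [IndepIn], rfl⟩ (bddAbove_domNum_indepIn G)

end gammaI

lemma IndepIn.product {G : SimpleGraph V} {H : SimpleGraph W} {A : Finset V} {B : Finset W}
    (hA : IndepIn G A) (hB : IndepIn H B) : IndepIn (G □ H) (A ×ˢ B) := by
  rintro ⟨x₁, x₂⟩ hx ⟨y₁, y₂⟩ hy hadj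
  rw [mem_product] at hx hy
  rcases SimpleGraph.boxProd_adj.1 hadj with ⟨h, -⟩ | ⟨h, -⟩
  · exact hA x₁ hx.1 y₁ hy.1 h
  · exact hB x₂ hx.2 y₂ hy.2 h

section BoxProd

variable [DecidableEq V] [DecidableEq W] {G : SimpleGraph V} {H : SimpleGraph W}
  [DecidableRel H.Adj] {A : Finset V} {B : Finset W} {D : Finset (V × W)} {rep : V → V}

lemma dominates_image_fst_union_image_rep (hD : Dominates (G □ H) D (A ×ˢ B))
    (hrep : ∀ a ∈ A, rep a = a ∨ G.Adj (rep a) a) {b : W} (hb : b ∈ B) :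
    Dominates G ({d ∈ D | d.2 = b}.image Prod.fst ∪
      {d ∈ D | d.1 ∈ A ∧ H.Adj d.2 b}.image (rep ∘ Prod.fst)) A := by
  intro a ha
  obtain ⟨⟨x, u⟩, hxu, hdom⟩ := hD (a, b) (mem_product.2 ⟨ha, hb⟩)
  have hrow : u = b → x ∈ {d ∈ D | d.2 = b}.image Prod.fst := fun hub =>
    mem_image_of_mem Prod.fst (mem_filter.2 ⟨hxu, hub⟩)
  rcases hdom with h | h
  · obtain ⟨rfl, rfl⟩ := Prod.mk.inj h
    exact ⟨x, mem_union_left _ (hrow rfl), Or.inl rfl⟩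
  rcases SimpleGraph.boxProd_adj.1 h with ⟨hxa, hub⟩ | ⟨hub, rfl⟩
  · exact ⟨x, mem_union_left _ (hrow hub), Or.inr hxa⟩
  · exact ⟨rep x, mem_union_right _ (mem_image_of_mem _ (mem_filter.2 ⟨hxu, ha, hub⟩)),
      hrep x ha⟩

lemma dominates_image_snd_filter (hB : IndepIn H B) (v : V) :
    Dominates H ({d ∈ D | d.1 ∈ A ∧ d.2 ∉ B ∧ rep d.1 = v}.image Prod.snd)
      {b ∈ B | v ∈ {d ∈ D | d.1 ∈ A ∧ H.Adj d.2 b}.image (rep ∘ Prod.fst)} := by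
  intro b hb
  obtain ⟨hbB, hv⟩ := mem_filter.1 hb
  obtain ⟨⟨a, u⟩, hau, rfl⟩ := mem_image.1 hv
  obtain ⟨hau, ha, hub⟩ := mem_filter.1 hau
  have hu : u ∉ B := fun hu => hB u hu b hbB hub
  exact ⟨u, mem_image.2 ⟨(a, u), mem_filter.2 ⟨hau, ha, hu, rfl⟩, rfl⟩, Or.inr hub⟩

theorem domNum_mul_domNum_le_card (hB : IndepIn H B) (hD : Dominates (G □ H) D (A ×ˢ B)) :
    domNum G A * domNum H B ≤ #D := by
  obtain ⟨T, hT, hTA⟩ := exists_dominates_card_eq_domNum G A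
  choose! rep hrepT hrep using hTA
  let I (b : W) : Finset V := {d ∈ D | d.1 ∈ A ∧ H.Adj d.2 b}.image (rep ∘ Prod.fst)
  let Z (v : V) : Finset W := {d ∈ D | d.1 ∈ A ∧ d.2 ∉ B ∧ rep d.1 = v}.image Prod.snd
  have row (b : W) (hb : b ∈ B) : domNum G A ≤ #{d ∈ D | d.2 = b} + #(I b) :=
    calc domNum G A
      _ ≤ #({d ∈ D | d.2 = b}.image Prod.fst ∪ I b) :=
          domNum_le_card_of_dominates (dominates_image_fst_union_image_rep hD hrep hb)
      _ ≤ #{d ∈ D | d.2 = b} + #(I b) := (card_union_le _ _).trans (by gcongr; exact card_image_le)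
  have column (v : V) : domNum H B + #{b ∈ B | v ∈ I b} ≤ #(Z v) + #B :=
    domNum_add_card_le (filter_subset _ _) (dominates_image_snd_filter hB v)
  have double_count : ∑ b ∈ B, #(I b) = ∑ v ∈ T, #{b ∈ B | v ∈ I b} := by
    have hIT (b : W) : I b ⊆ T := by
      intro v hv
      obtain ⟨d, hd, rfl⟩ := mem_image.1 hv
      exact hrepT _ (mem_filter.1 hd).2.1
    calc ∑ b ∈ B, #(I b)
      _ = ∑ b ∈ B, #{v ∈ T | v ∈ I b} :=
          sum_congr rfl fun b _ => by rw [filter_mem_eq_inter, inter_eq_right.2 (hIT b)]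
      _ = ∑ v ∈ T, #{b ∈ B | v ∈ I b} :=
          sum_card_bipartiteAbove_eq_sum_card_bipartiteBelow (fun b v => v ∈ I b)
  have hZ : ∑ v ∈ T, #(Z v) ≤ #{d ∈ D | d.2 ∉ B} :=
    calc ∑ v ∈ T, #(Z v)
      _ = ∑ v ∈ T, #({d ∈ {d ∈ D | d.1 ∈ A ∧ d.2 ∉ B} | rep d.1 = v}.image Prod.snd) := by
          simp only [Z, filter_filter, and_assoc]
      _ ≤ #{d ∈ D | d.1 ∈ A ∧ d.2 ∉ B} :=
          sum_card_image_filter_le fun d hd => hrepT _ (mem_filter.1 hd).2.1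
      _ ≤ #{d ∈ D | d.2 ∉ B} := card_le_card (monotone_filter_right D fun _ _ h => h.2)
  have hcount := sum_card_fiberwise_add_card_filter_notMem D B Prod.snd
  have hrows := sum_le_sum row
  have hcolumns := sum_le_sum fun v (_ : v ∈ T) => column v
  simp only [sum_const, smul_eq_mul, sum_add_distrib, hT] at hrows hcolumns
  linarith [mul_comm #B (domNum G A)]

end BoxProd

end

/-- For all finite graphs `G` and `H`, `γ^i(G □ H) ≥ γ^i(G) ⬝ γ^i(H)`. -/
theorem gammaI_boxProd_ge {V W : Type*} [Fintype V] [Fintype W]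
    (G : SimpleGraph V) (H : SimpleGraph W) :
    gammaI (G □ H) ≥ gammaI G * gammaI H := by
  classical
  obtain ⟨A, hA, hAγ⟩ := exists_indepIn_domNum_eq_gammaI G
  obtain ⟨B, hB, hBγ⟩ := exists_indepIn_domNum_eq_gammaI H
  obtain ⟨D, hD, hDA⟩ := exists_dominates_card_eq_domNum (G □ H) (A ×ˢ B)
  calc gammaI G * gammaI H
    _ = domNum G A * domNum H B := by rw [hAγ, hBγ]
    _ ≤ #D := domNum_mul_domNum_le_card hB hDA
    _ = domNum (G □ H) (A ×ˢ B) := hD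
    _ ≤ gammaI (G □ H) := domNum_le_gammaI (hA.product hB)
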